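/- Let f ∈ ℝ[x₁,…,x_n]ⁿ be a polynomial vector field, T > 0, g = (g₁,…,g_m) and h = (h₁,…,h_ℓ) tuples of polynomials in ℝ[x₁,…,x_n] such that X = {y ∈ ℝⁿ : g_i(y) ≥ 0 for all i} is compact and M = {y ∈ ℝⁿ : h_j(y) ≥ 0 for all j} satisfies M ⊆ X, and assume the region of attraction R_T^M is Lebesgue-measurable. Suppose the polynomials v ∈ ℝ[t, x₁,…,x_n] and w ∈ ℝ[x₁,…,x_n] satisfy: w ∈ Q(g); w − v(0,·) − 1 ∈ Q(g); −(∂_t v + ⟨∇_x v, f⟩) ∈ Q(g, (T−t)·t); and v(T,·) ∈ Q(h). Then ∫_X w dx ≥ vol(R_T^M), where vol denotes n-dimensional Lebesgue measure. -/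

import Mathlib

open MvPolynomial Set MeasureTheory

/-- The quadratic module `Q(g)` generated by `g₁, …, g_m`: polynomials of the form
`s₀ + s₁·g₁ + ⋯ + s_m·g_m` where each `sᵢ` is a sum of squares of polynomials. -/
def QuadraticModule {m : ℕ} {σ : Type*} (g : Fin m → MvPolynomial σ ℝ) :
    Set (MvPolynomial σ ℝ) :=
  {p | ∃ s₀ : MvPolynomial σ ℝ, ∃ s : Fin m → MvPolynomial σ ℝ,
    IsSumSq s₀ ∧ (∀ i, IsSumSq (s i)) ∧ p = s₀ + ∑ i, s i * g i}

/-- The region of attraction `R_T^M`: initial conditions `x₀` from which some solution of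
`x' = f(x)` stays in `X` on `[0,T]` and hits the target `M` at time `T`. -/
def RoA {n : ℕ} (f : (Fin n → ℝ) → (Fin n → ℝ)) (X M : Set (Fin n → ℝ)) (T : ℝ) :
    Set (Fin n → ℝ) :=
  {x₀ | ∃ x : ℝ → (Fin n → ℝ), x 0 = x₀ ∧
    (∀ t ∈ Icc (0 : ℝ) T, HasDerivAt x (f (x t)) t) ∧
    (∀ t ∈ Icc (0 : ℝ) T, x t ∈ X) ∧ x T ∈ M}

/-! Along a solution `x` with `x 0 = x₀` staying in `X` and ending in `M`, the function
`t ↦ v(t, x t)` has derivative `(∂ₜv + ⟨∇ₓv, f⟩)(t, x t) ≤ 0`, so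
`v(0, x₀) ≥ v(T, x T) ≥ 0`; hence `w(x₀) ≥ 1 + v(0, x₀) ≥ 1` on `R_T^M ⊆ X`. As `w ≥ 0` on `X`,
Markov's inequality gives `vol(R_T^M) ≤ ∫_X w`. -/

theorem IsSumSq.map {R S : Type*} [Semiring R] [Semiring S] (φ : R →+* S) {a : R}
    (h : IsSumSq a) : IsSumSq (φ a) := by
  induction h with
  | zero => simp
  | sq_add a _ ih => simpa using IsSumSq.sq_add (φ a) ih

lemma eval_nonneg_of_mem_quadraticModule {m : ℕ} {σ : Type*} {g : Fin m → MvPolynomial σ ℝ}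
    {p : MvPolynomial σ ℝ} (hp : p ∈ QuadraticModule g) {y : σ → ℝ}
    (hy : ∀ i, 0 ≤ eval y (g i)) : 0 ≤ eval y p := by
  obtain ⟨s₀, s, hs₀, hs, rfl⟩ := hp
  simp only [map_add, map_sum, map_mul]
  exact add_nonneg (hs₀.map _).nonneg
    (Finset.sum_nonneg fun i _ => mul_nonneg ((hs i).map _).nonneg (hy i))

namespace MvPolynomial

lemma eval_aeval_cons_C_X {n : ℕ} {R : Type*} [CommSemiring R] (a : R) (y : Fin n → R)
    (v : MvPolynomial (Fin (n + 1)) R) :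
    eval y (aeval (Fin.cons (C a) X) v) = eval (Fin.cons a y) v := by
  rw [aeval_eq_bind₁, eval, coe_eval₂Hom, ← coe_eval₂Hom, eval₂Hom_bind₁]
  congr 2
  ext i
  refine Fin.cases ?_ (fun k => ?_) i <;> simp

theorem hasDerivAt_eval_comp {σ : Type*} [Fintype σ] {c : ℝ → σ → ℝ} {c' : σ → ℝ} {t : ℝ}
    (hc : HasDerivAt c c' t) (p : MvPolynomial σ ℝ) :
    HasDerivAt (fun s => eval (c s) p) (∑ i, eval (c t) (pderiv i p) * c' i) t := by
  induction p using MvPolynomial.induction_on with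
  | C a => simpa using hasDerivAt_const t a
  | add p q hp hq => simpa [Finset.sum_add_distrib, add_mul] using hp.fun_add hq
  | mul_X p i hp =>
    have hpX : HasDerivAt (fun s => eval (c s) (p * X i))
        ((∑ j, eval (c t) (pderiv j p) * c' j) * c t i + eval (c t) p * c' i) t := by
      simpa only [map_mul, eval_X] using hp.fun_mul (hasDerivAt_pi.1 hc i)
    refine hpX.congr_deriv ?_
    classical
    simp only [pderiv_mul, pderiv_X, map_add, map_mul, eval_X, add_mul, Finset.sum_add_distrib,
      Pi.single_apply, apply_ite (eval (c t)), map_zero, mul_ite, ite_mul, mul_one,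
      mul_zero, zero_mul, Finset.sum_ite_eq, Finset.mem_univ, if_true, Finset.sum_mul]
    exact congrArg (· + _) (Finset.sum_congr rfl fun _ _ => mul_right_comm _ _ _)

end MvPolynomial

lemma measure_le_ofReal_setIntegral {α : Type*} [MeasurableSpace α] {μ : Measure α}
    {R S : Set α} {φ : α → ℝ} (hS : MeasurableSet S) (hφ : IntegrableOn φ S μ)
    (hφ0 : ∀ y ∈ S, 0 ≤ φ y) (hRS : R ⊆ S) (hφ1 : ∀ y ∈ R, 1 ≤ φ y) :
    μ R ≤ ENNReal.ofReal (∫ y in S, φ y ∂μ) := by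
  rw [ofReal_integral_eq_lintegral_ofReal hφ ((ae_restrict_iff' hS).2 (ae_of_all _ hφ0))]
  calc μ R ≤ μ ({y | 1 ≤ ENNReal.ofReal (φ y)} ∩ S) :=
        measure_mono fun y hy => ⟨by simpa using hφ1 y hy, hRS hy⟩
    _ ≤ μ.restrict S {y | 1 ≤ ENNReal.ofReal (φ y)} := Measure.le_restrict_apply _ _
    _ ≤ ∫⁻ y in S, ENNReal.ofReal (φ y) ∂μ := by
        simpa using mul_meas_ge_le_lintegral₀ hφ.aemeasurable.ennreal_ofReal 1

section Dynamics

variable {n : ℕ} {f : Fin n → MvPolynomial (Fin n) ℝ} {v : MvPolynomial (Fin (n + 1)) ℝ}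
  {x : ℝ → Fin n → ℝ} {T : ℝ}

/-- `∂ₜv + ⟨∇ₓv, f⟩`, with time as coordinate `0` of `Fin (n + 1)`. -/
noncomputable def lieDeriv (f : Fin n → MvPolynomial (Fin n) ℝ)
    (v : MvPolynomial (Fin (n + 1)) ℝ) : MvPolynomial (Fin (n + 1)) ℝ :=
  pderiv 0 v + ∑ k : Fin n, pderiv k.succ v * rename Fin.succ (f k)

lemma hasDerivAt_eval_cons_lieDeriv {t : ℝ} (hx : HasDerivAt x (fun k => eval (x t) (f k)) t) :
    HasDerivAt (fun s => eval (Fin.cons s (x s) : Fin (n + 1) → ℝ) v)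
      (eval (Fin.cons t (x t)) (lieDeriv f v)) t := by
  have hc : HasDerivAt (fun s => (Fin.cons s (x s) : Fin (n + 1) → ℝ))
      (Fin.cons 1 fun k => eval (x t) (f k)) t :=
    hasDerivAt_pi.2 <| Fin.cases (by simpa using hasDerivAt_id' t)
      fun k => by simpa using hasDerivAt_pi.1 hx k
  refine (hasDerivAt_eval_comp hc v).congr_deriv ?_
  simp [lieDeriv, Fin.sum_univ_succ, eval_rename, Function.comp_def]

lemma antitoneOn_eval_cons (hx : ∀ t ∈ Icc 0 T, HasDerivAt x (fun k => eval (x t) (f k)) t)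
    (hL : ∀ t ∈ Ioo 0 T, eval (Fin.cons t (x t)) (lieDeriv f v) ≤ 0) :
    AntitoneOn (fun t => eval (Fin.cons t (x t) : Fin (n + 1) → ℝ) v) (Icc 0 T) := by
  refine antitoneOn_of_hasDerivWithinAt_nonpos
    (f' := fun t => eval (Fin.cons t (x t)) (lieDeriv f v)) (convex_Icc 0 T)
    (fun t ht => (hasDerivAt_eval_cons_lieDeriv (hx t ht)).continuousAt.continuousWithinAt)
    (fun t ht => ?_) (fun t ht => ?_) <;> rw [interior_Icc] at ht
  · exact (hasDerivAt_eval_cons_lieDeriv (hx t (Ioo_subset_Icc_self ht))).hasDerivWithinAt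
  · exact hL t ht

lemma roA_subset {f : (Fin n → ℝ) → Fin n → ℝ} {X M : Set (Fin n → ℝ)} (hT : 0 ≤ T) :
    RoA f X M T ⊆ X := by
  rintro _ ⟨x, rfl, -, hxX, -⟩
  exact hxX 0 ⟨le_rfl, hT⟩

end Dynamics

section Certificate

variable {n m ℓ : ℕ} {f : Fin n → MvPolynomial (Fin n) ℝ} {T : ℝ}
  {g : Fin m → MvPolynomial (Fin n) ℝ} {h : Fin ℓ → MvPolynomial (Fin n) ℝ}
  {v : MvPolynomial (Fin (n + 1)) ℝ} {x₀ : Fin n → ℝ}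

lemma eval_cons_zero_nonneg_of_mem_roA (hT : 0 ≤ T)
    (hlie : -lieDeriv f v ∈
      QuadraticModule (Fin.cons ((C T - X 0) * X 0) fun i => rename Fin.succ (g i)))
    (hvT : aeval (Fin.cons (C T) X) v ∈ QuadraticModule h)
    (hx₀ : x₀ ∈ RoA (fun y k => eval y (f k))
      {y | ∀ i, 0 ≤ eval y (g i)} {y | ∀ j, 0 ≤ eval y (h j)} T) :
    0 ≤ eval (Fin.cons 0 x₀) v := by
  obtain ⟨x, rfl, hx, hxX, hxM⟩ := hx₀
  have hL : ∀ t ∈ Ioo 0 T, eval (Fin.cons t (x t)) (lieDeriv f v) ≤ 0 := by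
    intro t ht
    have hgen : ∀ i, 0 ≤ eval (Fin.cons t (x t))
        ((Fin.cons ((C T - X 0) * X 0) fun i => rename Fin.succ (g i) :
          Fin (m + 1) → MvPolynomial (Fin (n + 1)) ℝ) i) :=
      Fin.cases (by simpa using mul_nonneg (sub_nonneg.2 ht.2.le) ht.1.le)
        fun i => by simpa [eval_rename, Function.comp_def] using hxX t (Ioo_subset_Icc_self ht) i
    simpa using eval_nonneg_of_mem_quadraticModule hlie hgen
  calc 0 ≤ eval (Fin.cons T (x T)) v := by
        simpa only [eval_aeval_cons_C_X] using eval_nonneg_of_mem_quadraticModule hvT hxM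
    _ ≤ _ := antitoneOn_eval_cons hx hL ⟨le_rfl, hT⟩ ⟨hT, le_rfl⟩ hT

lemma one_le_eval_of_mem_roA {w : MvPolynomial (Fin n) ℝ} (hT : 0 ≤ T)
    (hwv : w - aeval (Fin.cons (C 0) X) v - 1 ∈ QuadraticModule g)
    (hlie : -lieDeriv f v ∈
      QuadraticModule (Fin.cons ((C T - X 0) * X 0) fun i => rename Fin.succ (g i)))
    (hvT : aeval (Fin.cons (C T) X) v ∈ QuadraticModule h)
    (hx₀ : x₀ ∈ RoA (fun y k => eval y (f k))
      {y | ∀ i, 0 ≤ eval y (g i)} {y | ∀ j, 0 ≤ eval y (h j)} T) :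
    1 ≤ eval x₀ w := by
  have hw := eval_nonneg_of_mem_quadraticModule hwv (roA_subset hT hx₀)
  rw [map_sub, map_sub, eval_aeval_cons_C_X, map_one] at hw
  linarith [eval_cons_zero_nonneg_of_mem_roA hT hlie hvT hx₀]

end Certificate

theorem sostab_stmt8_general {n m ℓ : ℕ}
    (f : Fin n → MvPolynomial (Fin n) ℝ) (T : ℝ) (hT : 0 < T)
    (g : Fin m → MvPolynomial (Fin n) ℝ) (h : Fin ℓ → MvPolynomial (Fin n) ℝ)
    (hXcp : IsCompact {y : Fin n → ℝ | ∀ i, 0 ≤ eval y (g i)})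
    (v : MvPolynomial (Fin (n + 1)) ℝ) (w : MvPolynomial (Fin n) ℝ)
    (hw : w ∈ QuadraticModule g)
    (hwv : w - aeval (Fin.cons (C (0 : ℝ)) MvPolynomial.X) v - 1 ∈ QuadraticModule g)
    (hlie : -(pderiv (0 : Fin (n + 1)) v
        + ∑ k : Fin n, pderiv k.succ v * rename Fin.succ (f k)) ∈
      QuadraticModule (Fin.cons ((C T - MvPolynomial.X (0 : Fin (n + 1))) * MvPolynomial.X 0)
        (fun i => rename Fin.succ (g i))))
    (hvT : aeval (Fin.cons (C T) MvPolynomial.X) v ∈ QuadraticModule h) :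
    volume (RoA (fun y k => eval y (f k))
        {y | ∀ i, 0 ≤ eval y (g i)} {y | ∀ j, 0 ≤ eval y (h j)} T)
      ≤ ENNReal.ofReal (∫ y in {y : Fin n → ℝ | ∀ i, 0 ≤ eval y (g i)}, eval y w) :=
  measure_le_ofReal_setIntegral hXcp.isClosed.measurableSet
    ((continuous_eval w).continuousOn.integrableOn_compact hXcp)
    (fun _ hy => eval_nonneg_of_mem_quadraticModule hw hy) (roA_subset hT.le)
    (fun _ hx₀ => one_le_eval_of_mem_roA hT.le hwv hlie hvT hx₀)

/-- for a compact basic semialgebraic admissible set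
`X = {y : ∀ i, gᵢ(y) ≥ 0}`, target `M = {y : ∀ j, hⱼ(y) ≥ 0} ⊆ X`, and SoS certificates
`(v, w)` feasible for the degree-`d` outer RoA SoS program, the integral of `w` over `X`
bounds the Lebesgue volume of the region of attraction: `∫_X w dx ≥ vol(R_T^M)`. -/
theorem sostab_stmt8 {n m ℓ : ℕ}
    (f : Fin n → MvPolynomial (Fin n) ℝ) (T : ℝ) (hT : 0 < T)
    (g : Fin m → MvPolynomial (Fin n) ℝ) (h : Fin ℓ → MvPolynomial (Fin n) ℝ)
    (hXcp : IsCompact {y : Fin n → ℝ | ∀ i, 0 ≤ eval y (g i)})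
    (hMX : {y : Fin n → ℝ | ∀ j, 0 ≤ eval y (h j)} ⊆ {y : Fin n → ℝ | ∀ i, 0 ≤ eval y (g i)})
    (hRm : MeasurableSet (RoA (fun y k => eval y (f k))
      {y | ∀ i, 0 ≤ eval y (g i)} {y | ∀ j, 0 ≤ eval y (h j)} T))
    (v : MvPolynomial (Fin (n + 1)) ℝ) (w : MvPolynomial (Fin n) ℝ)
    (hw : w ∈ QuadraticModule g)
    (hwv : w - aeval (Fin.cons (C (0 : ℝ)) MvPolynomial.X) v - 1 ∈ QuadraticModule g)
    (hlie : -(pderiv (0 : Fin (n + 1)) v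
        + ∑ k : Fin n, pderiv k.succ v * rename Fin.succ (f k)) ∈
      QuadraticModule (Fin.cons ((C T - MvPolynomial.X (0 : Fin (n + 1))) * MvPolynomial.X 0)
        (fun i => rename Fin.succ (g i))))
    (hvT : aeval (Fin.cons (C T) MvPolynomial.X) v ∈ QuadraticModule h) :
    volume (RoA (fun y k => eval y (f k))
        {y | ∀ i, 0 ≤ eval y (g i)} {y | ∀ j, 0 ≤ eval y (h j)} T)
      ≤ ENNReal.ofReal (∫ y in {y : Fin n → ℝ | ∀ i, 0 ≤ eval y (g i)}, eval y w) :=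
  sostab_stmt8_general f T hT g h hXcp v w hw hwv hlie hvT
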